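/- (Block uncertainty relation) Let Φ, Ψ be N×N unitary matrices partitioned into M = N/d blocks of d columns, and let x ∈ ℂ^N be nonzero with x = Σ_ℓ Φ[ℓ]a[ℓ] = Σ_ℓ Ψ[ℓ]b[ℓ]. Let A = ‖a‖_{2,0} and B = ‖b‖_{2,0} be the number of nonzero blocks of a and b respectively. Then √(AB) ≥ 1/(d·μ_B(Φ,Ψ)), and consequently (A+B)/2 ≥ 1/(d·μ_B(Φ,Ψ)). -/

import Mathlib

open Matrix

noncomputable def rho {m n : Type*} [Fintype m] [Fintype n] [DecidableEq n]
    (A : Matrix m n ℂ) : ℝ :=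
  ‖LinearMap.toContinuousLinearMap (Matrix.toEuclideanLin A)‖

noncomputable def enorm {n : Type*} [Fintype n] (v : n → ℂ) : ℝ :=
  Real.sqrt (∑ i, ‖v i‖ ^ 2)

def blk {α β γ : Type*} (D : Matrix α (β × γ) ℂ) (ℓ : β) : Matrix α γ ℂ :=
  Matrix.of fun i j => D i (ℓ, j)

def blk2 {ι κ d₁ d₂ : Type*} (A : Matrix (ι × d₁) (κ × d₂) ℂ) (ℓ : ι) (r : κ) :
    Matrix d₁ d₂ ℂ :=
  Matrix.of fun i j => A (ℓ, i) (r, j)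

noncomputable def rhoc {ι κ d : Type*} [Fintype ι] [Fintype κ] [Fintype d] [DecidableEq d]
    (A : Matrix (ι × d) (κ × d) ℂ) : ℝ :=
  ⨆ r : κ, ∑ ℓ : ι, rho (blk2 A ℓ r)

noncomputable def vnorm1 {ι d : Type*} [Fintype ι] [Fintype d] (v : ι × d → ℂ) : ℝ :=
  ∑ ℓ : ι, enorm (fun j => v (ℓ, j))

noncomputable def vnormInf {ι d : Type*} [Fintype ι] [Fintype d] (v : ι × d → ℂ) : ℝ :=
  ⨆ ℓ : ι, enorm (fun j => v (ℓ, j))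

noncomputable def pinv {α n : Type*} [Fintype α] [Fintype n] [DecidableEq n]
    (B : Matrix α n ℂ) : Matrix n α ℂ :=
  (Bᴴ * B)⁻¹ * Bᴴ

noncomputable def muB2 {M d : ℕ} (Φ Ψ : Matrix (Fin M × Fin d) (Fin M × Fin d) ℂ) : ℝ :=
  ⨆ p : Fin M × Fin M, (1 / (d : ℝ)) * rho ((blk Φ p.1)ᴴ * blk Ψ p.2)

/-- number of nonzero length-`d` blocks of a vector -/
noncomputable def blockNnz {M d : ℕ} (x : Fin M × Fin d → ℂ) : ℕ :=
  {ℓ : Fin M | ∃ j, x (ℓ, j) ≠ 0}.ncard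

/-!
Since `Φ` is unitary, `a = Φᴴ Ψ b`, so the block `a[ℓ]` is `∑ r, Φ[ℓ]ᴴ Ψ[r] b[r]`. Every block
`Φ[ℓ]ᴴ Ψ[r]` has spectral norm at most `d μ`, so by Cauchy–Schwarz over the `B` nonzero blocks of
`b`, each block of `a` has norm at most `d μ √B ‖b‖`; summing squares over the `A` nonzero blocks of
`a` gives `‖a‖ ≤ d μ √(A B) ‖b‖`. Since `‖a‖ = ‖x‖ = ‖b‖ > 0`, this is `1 ≤ d μ √(A B)`, and the
second bound follows by AM–GM.
-/

open Finset

namespace BlockSparse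

section Norms

-- `_root_.enorm` is the Euclidean norm defined above; the bare name clashes with `ENorm.enorm`.

variable {m n : Type*} [Fintype m] [Fintype n]

lemma enorm_eq_norm_toLp (v : n → ℂ) : _root_.enorm v = ‖WithLp.toLp 2 v‖ := by
  rw [EuclideanSpace.norm_eq]; rfl

lemma enorm_nonneg (v : n → ℂ) : 0 ≤ _root_.enorm v := Real.sqrt_nonneg _

lemma enorm_pos {v : n → ℂ} (hv : v ≠ 0) : 0 < _root_.enorm v := by
  rw [enorm_eq_norm_toLp, norm_pos_iff]
  exact fun h => hv (congrArg WithLp.ofLp h)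

lemma sq_enorm (v : n → ℂ) : _root_.enorm v ^ 2 = ∑ i, ‖v i‖ ^ 2 :=
  Real.sq_sqrt (by positivity)

lemma enorm_sum_le {ι : Type*} (s : Finset ι) (f : ι → n → ℂ) :
    _root_.enorm (∑ i ∈ s, f i) ≤ ∑ i ∈ s, _root_.enorm (f i) := by
  simp only [enorm_eq_norm_toLp, WithLp.toLp_sum]
  exact norm_sum_le _ _

lemma enorm_mulVec_le [DecidableEq n] (A : Matrix m n ℂ) (v : n → ℂ) :
    _root_.enorm (A *ᵥ v) ≤ rho A * _root_.enorm v := by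
  rw [enorm_eq_norm_toLp, enorm_eq_norm_toLp]
  exact (LinearMap.toContinuousLinearMap (toEuclideanLin A)).le_opNorm _

lemma enorm_unitary_mulVec [DecidableEq n] {U : Matrix n n ℂ}
    (hU : U ∈ Matrix.unitaryGroup n ℂ) (v : n → ℂ) :
    _root_.enorm (U *ᵥ v) = _root_.enorm v := by
  have hdot : star (U *ᵥ v) ⬝ᵥ (U *ᵥ v) = star v ⬝ᵥ v := by
    rw [star_mulVec, dotProduct_mulVec, vecMul_vecMul, ← star_eq_conjTranspose, hU.1,
      vecMul_one]
  have hsq (w : n → ℂ) : ((∑ i, ‖w i‖ ^ 2 : ℝ) : ℂ) = star w ⬝ᵥ w := by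
    simp [dotProduct, RCLike.conj_mul]
  unfold _root_.enorm
  congr 1
  exact_mod_cast (hsq _).trans (hdot.trans (hsq v).symm)

end Norms

section Blocks

variable {ι κ d e : Type*}

lemma sq_enorm_eq_sum_sq_enorm_curry [Fintype ι] [Fintype d] (v : ι × d → ℂ) :
    _root_.enorm v ^ 2 = ∑ ℓ, _root_.enorm (Function.curry v ℓ) ^ 2 := by
  simp only [sq_enorm, Fintype.sum_prod_type, Function.curry_apply]

open Classical in
noncomputable def blockSupport [Fintype ι] (v : ι × d → ℂ) : Finset ι :=
  {ℓ | Function.curry v ℓ ≠ 0}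

lemma curry_eq_zero_of_notMem_blockSupport [Fintype ι] {v : ι × d → ℂ} {ℓ : ι}
    (h : ℓ ∉ blockSupport v) : Function.curry v ℓ = 0 := by
  simpa [blockSupport] using h

lemma sum_enorm_curry_le [Fintype ι] [Fintype d] (v : ι × d → ℂ) :
    ∑ ℓ ∈ blockSupport v, _root_.enorm (Function.curry v ℓ) ≤
      √(#(blockSupport v) : ℝ) * _root_.enorm v := by
  rw [← Real.sqrt_sq (enorm_nonneg v), ← Real.sqrt_mul (Nat.cast_nonneg _),
    Real.le_sqrt (sum_nonneg fun ℓ _ => enorm_nonneg _) (by positivity)]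
  calc (∑ ℓ ∈ blockSupport v, _root_.enorm (Function.curry v ℓ)) ^ 2
      ≤ (#(blockSupport v) : ℝ) * ∑ ℓ ∈ blockSupport v, _root_.enorm (Function.curry v ℓ) ^ 2 :=
        sq_sum_le_card_mul_sum_sq
    _ ≤ (#(blockSupport v) : ℝ) * _root_.enorm v ^ 2 := by
        rw [sq_enorm_eq_sum_sq_enorm_curry]
        gcongr
        exact subset_univ _

lemma enorm_le_sqrt_card_mul [Fintype ι] [Fintype d] {v : ι × d → ℂ} {K : ℝ}
    (hK0 : 0 ≤ K) (hK : ∀ ℓ, _root_.enorm (Function.curry v ℓ) ≤ K) :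
    _root_.enorm v ≤ √(#(blockSupport v) : ℝ) * K := by
  rw [← Real.sqrt_sq (enorm_nonneg v), ← Real.sqrt_sq hK0, ← Real.sqrt_mul (Nat.cast_nonneg _)]
  gcongr
  calc _root_.enorm v ^ 2 = ∑ ℓ ∈ blockSupport v, _root_.enorm (Function.curry v ℓ) ^ 2 := by
        rw [sq_enorm_eq_sum_sq_enorm_curry]
        refine (sum_subset (subset_univ _) fun ℓ _ hℓ => ?_).symm
        rw [curry_eq_zero_of_notMem_blockSupport hℓ]
        simp [_root_.enorm]
    _ ≤ (#(blockSupport v) : ℝ) * K ^ 2 := by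
        rw [← nsmul_eq_mul, ← sum_const]
        gcongr with ℓ
        · exact enorm_nonneg _
        · exact hK ℓ

lemma curry_mulVec [Fintype κ] [Fintype e] (C : Matrix (ι × d) (κ × e) ℂ) (v : κ × e → ℂ)
    (ℓ : ι) : Function.curry (C *ᵥ v) ℓ = ∑ r, blk2 C ℓ r *ᵥ Function.curry v r := by
  ext i
  simp [mulVec, dotProduct, blk2, Fintype.sum_prod_type]

lemma enorm_curry_mulVec_le [Fintype κ] [Fintype d] [Fintype e] [DecidableEq e]
    {C : Matrix (ι × d) (κ × e) ℂ} {c : ℝ} (hc : 0 ≤ c) (hC : ∀ ℓ r, rho (blk2 C ℓ r) ≤ c)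
    (v : κ × e → ℂ) (ℓ : ι) :
    _root_.enorm (Function.curry (C *ᵥ v) ℓ) ≤
      c * (√(#(blockSupport v) : ℝ) * _root_.enorm v) := by
  calc _root_.enorm (Function.curry (C *ᵥ v) ℓ)
      ≤ ∑ r, _root_.enorm (blk2 C ℓ r *ᵥ Function.curry v r) := by
        rw [curry_mulVec]; exact enorm_sum_le _ _
    _ = ∑ r ∈ blockSupport v, _root_.enorm (blk2 C ℓ r *ᵥ Function.curry v r) := by
        refine (sum_subset (subset_univ _) fun r _ hr => ?_).symm
        rw [curry_eq_zero_of_notMem_blockSupport hr, mulVec_zero]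
        simp [_root_.enorm]
    _ ≤ ∑ r ∈ blockSupport v, c * _root_.enorm (Function.curry v r) := by
        gcongr with r
        exact (enorm_mulVec_le _ _).trans (by gcongr; exacts [enorm_nonneg _, hC ℓ r])
    _ ≤ c * (√(#(blockSupport v) : ℝ) * _root_.enorm v) := by
        rw [← mul_sum]; gcongr; exact sum_enorm_curry_le v

theorem enorm_mulVec_le_sqrt_card_mul [Fintype ι] [Fintype κ] [Fintype d] [Fintype e]
    [DecidableEq e] {C : Matrix (ι × d) (κ × e) ℂ} {c : ℝ} (hc : 0 ≤ c)
    (hC : ∀ ℓ r, rho (blk2 C ℓ r) ≤ c) (v : κ × e → ℂ) :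
    _root_.enorm (C *ᵥ v) ≤
      c * √((#(blockSupport (C *ᵥ v)) : ℝ) * #(blockSupport v)) * _root_.enorm v := by
  calc _root_.enorm (C *ᵥ v)
      ≤ √(#(blockSupport (C *ᵥ v)) : ℝ) * (c * (√(#(blockSupport v) : ℝ) * _root_.enorm v)) :=
        enorm_le_sqrt_card_mul (by have := enorm_nonneg v; positivity)
          (enorm_curry_mulVec_le hc hC v)
    _ = _ := by rw [Real.sqrt_mul (Nat.cast_nonneg _)]; ring

end Blocks

lemma blk2_conjTranspose_mul {α ι κ d e : Type*} [Fintype α] (Φ : Matrix α (ι × d) ℂ)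
    (Ψ : Matrix α (κ × e) ℂ) (ℓ : ι) (r : κ) :
    blk2 (Φᴴ * Ψ) ℓ r = (blk Φ ℓ)ᴴ * blk Ψ r := by
  ext i j
  simp [blk2, blk, mul_apply, conjTranspose_apply]

lemma muB2_nonneg {M d : ℕ} (Φ Ψ : Matrix (Fin M × Fin d) (Fin M × Fin d) ℂ) :
    0 ≤ muB2 Φ Ψ :=
  Real.iSup_nonneg fun _ => mul_nonneg (by positivity) (norm_nonneg _)

lemma rho_le_mul_muB2 {M d : ℕ} (hd : 0 < d) (Φ Ψ : Matrix (Fin M × Fin d) (Fin M × Fin d) ℂ)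
    (ℓ r : Fin M) : rho ((blk Φ ℓ)ᴴ * blk Ψ r) ≤ d * muB2 Φ Ψ := by
  have hle : (1 / (d : ℝ)) * rho ((blk Φ ℓ)ᴴ * blk Ψ r) ≤ muB2 Φ Ψ :=
    le_ciSup (f := fun p : Fin M × Fin M => (1 / (d : ℝ)) * rho ((blk Φ p.1)ᴴ * blk Ψ p.2))
      (Set.finite_range _).bddAbove (ℓ, r)
  rwa [one_div_mul_eq_div, div_le_iff₀' (by positivity)] at hle

lemma blockNnz_eq_card_blockSupport {M d : ℕ} (v : Fin M × Fin d → ℂ) :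
    blockNnz v = #(blockSupport v) := by
  rw [blockNnz, ← Set.ncard_coe_finset]
  congr 1
  ext ℓ
  simp [blockSupport, Function.ne_iff]

end BlockSparse

open BlockSparse in
theorem block_uncertainty_relation_general (M d : ℕ) (hd : 0 < d)
    (Φ Ψ : Matrix (Fin M × Fin d) (Fin M × Fin d) ℂ)
    (hΦ : Φ ∈ Matrix.unitaryGroup (Fin M × Fin d) ℂ)
    (hΨ : Ψ ∈ Matrix.unitaryGroup (Fin M × Fin d) ℂ)
    (x a b : Fin M × Fin d → ℂ) (hx : x ≠ 0)
    (ha : x = Φ.mulVec a) (hb : x = Ψ.mulVec b) :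
    Real.sqrt ((blockNnz a : ℝ) * (blockNnz b : ℝ)) ≥ 1 / ((d : ℝ) * muB2 Φ Ψ) ∧
    ((blockNnz a : ℝ) + (blockNnz b : ℝ)) / 2 ≥ 1 / ((d : ℝ) * muB2 Φ Ψ) := by
  set c := (d : ℝ) * muB2 Φ Ψ
  have hab : a = (Φᴴ * Ψ) *ᵥ b := by
    rw [← mulVec_mulVec, ← hb, ha, mulVec_mulVec, ← star_eq_conjTranspose, hΦ.1, one_mulVec]
  have hnorm : _root_.enorm a = _root_.enorm b := by
    rw [← enorm_unitary_mulVec hΦ a, ← ha, hb, enorm_unitary_mulVec hΨ]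
  have hpos : 0 < _root_.enorm b := by
    rw [← enorm_unitary_mulVec hΨ, ← hb]; exact enorm_pos hx
  have hbound := enorm_mulVec_le_sqrt_card_mul (mul_nonneg (Nat.cast_nonneg d) (muB2_nonneg Φ Ψ))
    (fun ℓ r => (blk2_conjTranspose_mul Φ Ψ ℓ r).symm ▸ rho_le_mul_muB2 hd Φ Ψ ℓ r) b
  rw [← hab, hnorm, ← blockNnz_eq_card_blockSupport, ← blockNnz_eq_card_blockSupport] at hbound
  set A := (blockNnz a : ℝ)
  set B := (blockNnz b : ℝ)
  have hone : 1 ≤ c * √(A * B) := by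
    rwa [le_mul_iff_one_le_left hpos] at hbound
  have hc : 0 < c := pos_of_mul_pos_left (one_pos.trans_le hone) (Real.sqrt_nonneg _)
  have hgeom : 1 / c ≤ √(A * B) := by
    rwa [div_le_iff₀' hc]
  have hamgm : √(A * B) ≤ (A + B) / 2 :=
    Real.sqrt_le_iff.mpr ⟨by positivity, by nlinarith [sq_nonneg (A - B)]⟩
  exact ⟨hgeom, hgeom.trans hamgm⟩

theorem block_uncertainty_relation (M d : ℕ) (hM : 0 < M) (hd : 0 < d)
    (Φ Ψ : Matrix (Fin M × Fin d) (Fin M × Fin d) ℂ)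
    (hΦ : Φ ∈ Matrix.unitaryGroup (Fin M × Fin d) ℂ)
    (hΨ : Ψ ∈ Matrix.unitaryGroup (Fin M × Fin d) ℂ)
    (x a b : Fin M × Fin d → ℂ) (hx : x ≠ 0)
    (ha : x = Φ.mulVec a) (hb : x = Ψ.mulVec b) :
    Real.sqrt ((blockNnz a : ℝ) * (blockNnz b : ℝ)) ≥ 1 / ((d : ℝ) * muB2 Φ Ψ) ∧
    ((blockNnz a : ℝ) + (blockNnz b : ℝ)) / 2 ≥ 1 / ((d : ℝ) * muB2 Φ Ψ) :=
  block_uncertainty_relation_general M d hd Φ Ψ hΦ hΨ x a b hx ha hb
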